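/- Consider the iPALM iteration at step k. Then F(x1^{k+1}, x2^{k+1}) ≤ F(x1^k, x2^k) + (L1(x2^k)·β1^k + τ1^k·α1^k)·Δ1^k + (L2(x1^{k+1})·β2^k + τ2^k·α2^k)·Δ2^k + ((1 + β1^k)·L1(x2^k) − τ1^k(1 − α1^k))·Δ1^{k+1} + ((1 + β2^k)·L2(x1^{k+1}) − τ2^k(1 − α2^k))·Δ2^{k+1}. -/

import Mathlib

open RealInnerProductSpace intervalIntegral

lemma descent_lemma {E : Type*} [NormedAddCommGroup E] [InnerProductSpace ℝ E] [CompleteSpace E]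
    (g : E → ℝ) (L : ℝ) (hL : 0 ≤ L) (hg : Differentiable ℝ g)
    (hlip : ∀ u v, ‖gradient g u - gradient g v‖ ≤ L * ‖u - v‖)
    (a b : E) :
    g b ≤ g a + ⟪gradient g a, b - a⟫ + L / 2 * ‖b - a‖ ^ 2 := by
  set v := b - a with hv
  have hc : ∀ t : ℝ, HasDerivAt (fun t : ℝ => a + t • v) v t := by
    intro t
    simpa using ((hasDerivAt_id t).smul_const v).const_add a
  have hφ : ∀ t : ℝ, HasDerivAt (fun t : ℝ => g (a + t • v))
      ⟪gradient g (a + t • v), v⟫ t := by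
    intro t
    have h1 : HasFDerivAt g (InnerProductSpace.toDual ℝ E (gradient g (a + t • v)))
        (a + t • v) := (hg _).hasGradientAt.hasFDerivAt
    simpa [InnerProductSpace.toDual_apply_apply, Function.comp_def] using h1.comp_hasDerivAt t (hc t)
  have hgradlip : LipschitzWith (Real.toNNReal L) (gradient g) := by
    apply LipschitzWith.of_dist_le_mul
    intro u w
    rw [dist_eq_norm, dist_eq_norm, Real.coe_toNNReal L hL]
    exact hlip u w
  have hcont : Continuous fun t : ℝ => ⟪gradient g (a + t • v), v⟫ := by
    exact Continuous.inner (hgradlip.continuous.comp (by fun_prop)) continuous_const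
  have hFTC : ∫ t in (0:ℝ)..1, ⟪gradient g (a + t • v), v⟫ = g b - g a := by
    rw [intervalIntegral.integral_eq_sub_of_hasDerivAt (fun t _ => hφ t)
      (hcont.intervalIntegrable 0 1)]
    simp [hv]
  have hbound : ∫ t in (0:ℝ)..1, ⟪gradient g (a + t • v), v⟫
      ≤ ∫ t in (0:ℝ)..1, (⟪gradient g a, v⟫ + L * ‖v‖ ^ 2 * t) := by
    apply intervalIntegral.integral_mono_on (by norm_num)
      (hcont.intervalIntegrable 0 1)
      (by apply Continuous.intervalIntegrable; fun_prop)
    intro t ht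
    have h1 : ⟪gradient g (a + t • v) - gradient g a, v⟫
        ≤ ‖gradient g (a + t • v) - gradient g a‖ * ‖v‖ := real_inner_le_norm _ _
    have h2 : ‖gradient g (a + t • v) - gradient g a‖ ≤ L * (t * ‖v‖) := by
      have := hlip (a + t • v) a
      simpa [norm_smul, abs_of_nonneg ht.1] using this
    have h3 : ⟪gradient g (a + t • v) - gradient g a, v⟫ ≤ L * ‖v‖ ^ 2 * t := by
      calc ⟪gradient g (a + t • v) - gradient g a, v⟫
          ≤ ‖gradient g (a + t • v) - gradient g a‖ * ‖v‖ := h1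
        _ ≤ (L * (t * ‖v‖)) * ‖v‖ := by
            apply mul_le_mul_of_nonneg_right h2 (norm_nonneg _)
        _ = L * ‖v‖ ^ 2 * t := by ring
    rw [inner_sub_left] at h3
    linarith
  have hval : ∫ t in (0:ℝ)..1, (⟪gradient g a, v⟫ + L * ‖v‖ ^ 2 * t)
      = ⟪gradient g a, v⟫ + L / 2 * ‖v‖ ^ 2 := by
    rw [intervalIntegral.integral_add (intervalIntegrable_const)
      (by apply Continuous.intervalIntegrable; fun_prop)]
    rw [intervalIntegral.integral_const, intervalIntegral.integral_const_mul, integral_id]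
    simp; ring
  rw [hval] at hbound
  rw [hFTC] at hbound
  linarith

set_option maxHeartbeats 1000000 in
lemma block_lemma {E : Type*} [NormedAddCommGroup E] [InnerProductSpace ℝ E] [CompleteSpace E]
    (g : E → ℝ) (L : ℝ) (hL : 0 ≤ L) (hg : Differentiable ℝ g)
    (hlip : ∀ u v, ‖gradient g u - gradient g v‖ ≤ L * ‖u - v‖)
    (xm x xp : E) (α β τ : ℝ) (hα0 : 0 ≤ α) (hβ0 : 0 ≤ β) (hτ : 0 < τ)
    (y z : E) (hy : y = x + α • (x - xm)) (hz : z = x + β • (x - xm))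
    (p r : ℝ)
    (hprox : p + τ / 2 * ‖xp - (y - (1 / τ) • gradient g z)‖ ^ 2
      ≤ r + τ / 2 * ‖x - (y - (1 / τ) • gradient g z)‖ ^ 2) :
    p + g xp ≤ r + g x + (L * β + τ * α) * (1 / 2 * ‖x - xm‖ ^ 2)
      + ((1 + β) * L - τ * (1 - α)) * (1 / 2 * ‖xp - x‖ ^ 2) := by
  have hxc : x - (y - (1 / τ) • gradient g z)
      = (1 / τ) • gradient g z - α • (x - xm) := by
    rw [hy]; module
  have hsplit : xp - (y - (1 / τ) • gradient g z)
      = (x - (y - (1 / τ) • gradient g z)) + (xp - x) := by abel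
  have hexp : ‖xp - (y - (1 / τ) • gradient g z)‖ ^ 2
      = ‖x - (y - (1 / τ) • gradient g z)‖ ^ 2
        + 2 * ⟪x - (y - (1 / τ) • gradient g z), xp - x⟫ + ‖xp - x‖ ^ 2 := by
    rw [hsplit, norm_add_sq_real]
  have hip : ⟪x - (y - (1 / τ) • gradient g z), xp - x⟫
      = (1 / τ) * ⟪gradient g z, xp - x⟫ - α * ⟪x - xm, xp - x⟫ := by
    rw [hxc, inner_sub_left, real_inner_smul_left, real_inner_smul_left]
  have hB : τ * ⟪x - (y - (1 / τ) • gradient g z), xp - x⟫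
      = ⟪gradient g z, xp - x⟫ - τ * α * ⟪x - xm, xp - x⟫ := by
    rw [hip]; field_simp
  have hprox' : p ≤ r - τ / 2 * ‖xp - x‖ ^ 2 + τ * α * ⟪x - xm, xp - x⟫
      - ⟪gradient g z, xp - x⟫ := by
    rw [hexp] at hprox; nlinarith [hprox, hB]
  have hdes := descent_lemma g L hL hg hlip x xp
  have hxz : ‖x - z‖ = β * ‖x - xm‖ := by
    have : x - z = -(β • (x - xm)) := by rw [hz]; abel
    rw [this, norm_neg, norm_smul, Real.norm_eq_abs, abs_of_nonneg hβ0]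
  have h3 : ⟪gradient g x, xp - x⟫ - ⟪gradient g z, xp - x⟫
      ≤ L * β * (‖x - xm‖ * ‖xp - x‖) := by
    have h1 := real_inner_le_norm (gradient g x - gradient g z) (xp - x)
    have h2 := hlip x z
    rw [hxz] at h2
    rw [inner_sub_left] at h1
    nlinarith [norm_nonneg (xp - x), norm_nonneg (gradient g x - gradient g z)]
  have h4a : ⟪x - xm, xp - x⟫ ≤ ‖x - xm‖ * ‖xp - x‖ := real_inner_le_norm _ _
  have h4 : τ * α * ⟪x - xm, xp - x⟫ ≤ τ * α * (‖x - xm‖ * ‖xp - x‖) :=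
    mul_le_mul_of_nonneg_left h4a (by positivity)
  have hyoung : ‖x - xm‖ * ‖xp - x‖ ≤ (‖x - xm‖ ^ 2 + ‖xp - x‖ ^ 2) / 2 := by
    nlinarith [sq_nonneg (‖x - xm‖ - ‖xp - x‖)]
  have h5 : (L * β + τ * α) * (‖x - xm‖ * ‖xp - x‖)
      ≤ (L * β + τ * α) * ((‖x - xm‖ ^ 2 + ‖xp - x‖ ^ 2) / 2) :=
    mul_le_mul_of_nonneg_left hyoung (by positivity)
  nlinarith [hprox', hdes, h3, h4, h5]


/-- Corollary 4.3 of the paper: one-step descent estimate for iPALM with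
the parameter choices `s1 = L1(x2^k)·β1^k`, `s2 = L2(x1^{k+1})·β2^k`.
Here `F(x1,x2) = f1(x1) + f2(x2) + H(x1,x2)` with `f1, f2` proper, lower semicontinuous
and bounded below, and `H` differentiable in each block with partial gradients
`L1(x2)`- resp. `L2(x1)`-Lipschitz.  With `Δ1 = ½‖x1 − x1⁻‖²`, `Δ2 = ½‖x2 − x2⁻‖²`,
`Δ1⁺ = ½‖x1⁺ − x1‖²`, `Δ2⁺ = ½‖x2⁺ − x2‖²`:
`F(x1⁺,x2⁺) ≤ F(x1,x2) + (L1(x2)β1 + τ1α1)·Δ1 + (L2(x1⁺)β2 + τ2α2)·Δ2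
 + ((1+β1)L1(x2) − τ1(1−α1))·Δ1⁺ + ((1+β2)L2(x1⁺) − τ2(1−α2))·Δ2⁺`. -/
theorem stmt_8 {n1 n2 : ℕ}
    (f1 : EuclideanSpace ℝ (Fin n1) → EReal) (f2 : EuclideanSpace ℝ (Fin n2) → EReal)
    (H : EuclideanSpace ℝ (Fin n1) → EuclideanSpace ℝ (Fin n2) → ℝ)
    (L1 : EuclideanSpace ℝ (Fin n2) → ℝ) (L2 : EuclideanSpace ℝ (Fin n1) → ℝ)
    -- f1, f2 proper, lower semicontinuous and bounded below
    (hf1proper : ∃ x, f1 x ≠ ⊤) (hf1nobot : ∀ x, f1 x ≠ ⊥)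
    (hf1lsc : LowerSemicontinuous f1) (hf1bdd : ∃ m : ℝ, ∀ x, (m : EReal) ≤ f1 x)
    (hf2proper : ∃ x, f2 x ≠ ⊤) (hf2nobot : ∀ x, f2 x ≠ ⊥)
    (hf2lsc : LowerSemicontinuous f2) (hf2bdd : ∃ m : ℝ, ∀ x, (m : EReal) ≤ f2 x)
    -- H differentiable in each block with Lipschitz partial gradients
    (hH1 : ∀ x2, Differentiable ℝ (fun x1 => H x1 x2))
    (hH2 : ∀ x1, Differentiable ℝ (fun x2 => H x1 x2))
    (hL1nonneg : ∀ x2, 0 ≤ L1 x2) (hL2nonneg : ∀ x1, 0 ≤ L2 x1)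
    (hL1lip : ∀ x2 u v, ‖gradient (fun x1 => H x1 x2) u - gradient (fun x1 => H x1 x2) v‖
      ≤ L1 x2 * ‖u - v‖)
    (hL2lip : ∀ x1 u v, ‖gradient (fun x2 => H x1 x2) u - gradient (fun x2 => H x1 x2) v‖
      ≤ L2 x1 * ‖u - v‖)
    -- iterates at steps k-1, k, k+1 and parameters of step k
    (x1km1 x1k x1kp1 : EuclideanSpace ℝ (Fin n1))
    (x2km1 x2k x2kp1 : EuclideanSpace ℝ (Fin n2))
    (α1 β1 τ1 α2 β2 τ2 : ℝ)
    (hα1 : α1 ∈ Set.Icc (0 : ℝ) 1) (hβ1 : β1 ∈ Set.Icc (0 : ℝ) 1) (hτ1 : 0 < τ1)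
    (hα2 : α2 ∈ Set.Icc (0 : ℝ) 1) (hβ2 : β2 ∈ Set.Icc (0 : ℝ) 1) (hτ2 : 0 < τ2)
    (y1 z1 : EuclideanSpace ℝ (Fin n1)) (y2 z2 : EuclideanSpace ℝ (Fin n2))
    (hy1 : y1 = x1k + α1 • (x1k - x1km1)) (hz1 : z1 = x1k + β1 • (x1k - x1km1))
    (hy2 : y2 = x2k + α2 • (x2k - x2km1)) (hz2 : z2 = x2k + β2 • (x2k - x2km1))
    -- x1kp1 ∈ prox_{τ1}^{f1}(y1 − (1/τ1)∇_{x1}H(z1, x2k))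
    (hprox1 : ∀ q : EuclideanSpace ℝ (Fin n1),
      f1 x1kp1 + (((τ1 / 2) *
          ‖x1kp1 - (y1 - (1 / τ1) • gradient (fun a => H a x2k) z1)‖ ^ 2 : ℝ) : EReal)
        ≤ f1 q + (((τ1 / 2) *
          ‖q - (y1 - (1 / τ1) • gradient (fun a => H a x2k) z1)‖ ^ 2 : ℝ) : EReal))
    -- x2kp1 ∈ prox_{τ2}^{f2}(y2 − (1/τ2)∇_{x2}H(x1kp1, z2))
    (hprox2 : ∀ q : EuclideanSpace ℝ (Fin n2),
      f2 x2kp1 + (((τ2 / 2) *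
          ‖x2kp1 - (y2 - (1 / τ2) • gradient (fun b => H x1kp1 b) z2)‖ ^ 2 : ℝ) : EReal)
        ≤ f2 q + (((τ2 / 2) *
          ‖q - (y2 - (1 / τ2) • gradient (fun b => H x1kp1 b) z2)‖ ^ 2 : ℝ) : EReal)) :
    f1 x1kp1 + f2 x2kp1 + (H x1kp1 x2kp1 : EReal)
      ≤ f1 x1k + f2 x2k + (H x1k x2k : EReal)
        + (((L1 x2k * β1 + τ1 * α1) * ((1 / 2) * ‖x1k - x1km1‖ ^ 2)
            + (L2 x1kp1 * β2 + τ2 * α2) * ((1 / 2) * ‖x2k - x2km1‖ ^ 2)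
            + ((1 + β1) * L1 x2k - τ1 * (1 - α1)) * ((1 / 2) * ‖x1kp1 - x1k‖ ^ 2)
            + ((1 + β2) * L2 x1kp1 - τ2 * (1 - α2)) * ((1 / 2) * ‖x2kp1 - x2k‖ ^ 2) : ℝ)
          : EReal) := by
  by_cases h1top : f1 x1k = ⊤
  · rw [h1top, EReal.top_add_of_ne_bot (hf2nobot _),
      EReal.top_add_of_ne_bot (EReal.coe_ne_bot _),
      EReal.top_add_of_ne_bot (EReal.coe_ne_bot _)]
    exact le_top
  by_cases h2top : f2 x2k = ⊤
  · rw [h2top, EReal.add_top_of_ne_bot (hf1nobot _),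
      EReal.top_add_of_ne_bot (EReal.coe_ne_bot _),
      EReal.top_add_of_ne_bot (EReal.coe_ne_bot _)]
    exact le_top
  obtain ⟨r1, hr1⟩ : ∃ r : ℝ, f1 x1k = (r : EReal) :=
    ⟨(f1 x1k).toReal, (EReal.coe_toReal h1top (hf1nobot _)).symm⟩
  obtain ⟨r2, hr2⟩ : ∃ r : ℝ, f2 x2k = (r : EReal) :=
    ⟨(f2 x2k).toReal, (EReal.coe_toReal h2top (hf2nobot _)).symm⟩
  have hk1 := hprox1 x1k
  have hk2 := hprox2 x2k
  have h1ptop : f1 x1kp1 ≠ ⊤ := by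
    intro h
    rw [h, hr1, EReal.top_add_of_ne_bot (EReal.coe_ne_bot _), ← EReal.coe_add] at hk1
    exact absurd hk1 (not_le.mpr (EReal.coe_lt_top _))
  have h2ptop : f2 x2kp1 ≠ ⊤ := by
    intro h
    rw [h, hr2, EReal.top_add_of_ne_bot (EReal.coe_ne_bot _), ← EReal.coe_add] at hk2
    exact absurd hk2 (not_le.mpr (EReal.coe_lt_top _))
  obtain ⟨p1, hp1⟩ : ∃ p : ℝ, f1 x1kp1 = (p : EReal) :=
    ⟨(f1 x1kp1).toReal, (EReal.coe_toReal h1ptop (hf1nobot _)).symm⟩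
  obtain ⟨p2, hp2⟩ : ∃ p : ℝ, f2 x2kp1 = (p : EReal) :=
    ⟨(f2 x2kp1).toReal, (EReal.coe_toReal h2ptop (hf2nobot _)).symm⟩
  rw [hp1, hr1, ← EReal.coe_add, ← EReal.coe_add, EReal.coe_le_coe_iff] at hk1
  rw [hp2, hr2, ← EReal.coe_add, ← EReal.coe_add, EReal.coe_le_coe_iff] at hk2
  subst hy1 hz1 hy2 hz2
  have hb1 := block_lemma (fun a => H a x2k) (L1 x2k) (hL1nonneg x2k) (hH1 x2k)
    (hL1lip x2k) x1km1 x1k x1kp1 α1 β1 τ1 hα1.1 hβ1.1 hτ1 _ _ rfl rfl p1 r1 hk1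
  have hb2 := block_lemma (fun b => H x1kp1 b) (L2 x1kp1) (hL2nonneg x1kp1) (hH2 x1kp1)
    (hL2lip x1kp1) x2km1 x2k x2kp1 α2 β2 τ2 hα2.1 hβ2.1 hτ2 _ _ rfl rfl p2 r2 hk2
  rw [hp1, hp2, hr1, hr2, ← EReal.coe_add, ← EReal.coe_add, ← EReal.coe_add,
    ← EReal.coe_add, ← EReal.coe_add, EReal.coe_le_coe_iff]
  linarith [hb1, hb2]
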